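/- arXiv:2506.23781 — 2 statements merged into one kernel-verified Lean document; each statement's English description precedes it below -/
import Mathlib

section
/- Easy direction of the Fundamental Lemma: let (u^d, y^d) be a trajectory of length T of the LTI system (A,B,C,D), let N ≤ T, and let g ∈ ℝ^{T−N+1} be arbitrary. Then the pair (u, y) defined by u = H_N(u^d) g and y = H_N(y^d) g (interpreted as length-N signals with values in ℝ^m and ℝ^p respectively) is a trajectory of length N of the same system. -/
open Matrix

/-- The block Hankel matrix of depth `N` of a signal `u` of length `T` with
values in `ℝ^m` (0-indexed: the `(i,k)` block is `u (i+k)` for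
`i = 0,…,N-1`, `k = 0,…,T-N`). -/
def hankelMatrix (m N T : ℕ) (u : ℕ → Fin m → ℝ) :
    Matrix (Fin N × Fin m) (Fin (T - N + 1)) ℝ :=
  fun ia k => u (ia.1.val + k.val) ia.2

/-- `(u, y)` is an input-output trajectory of length `N` of the LTI system
`(A, B, C, D)`. -/
def IsTrajectory (n m p N : ℕ) (A : Matrix (Fin n) (Fin n) ℝ)
    (B : Matrix (Fin n) (Fin m) ℝ) (C : Matrix (Fin p) (Fin n) ℝ)
    (D : Matrix (Fin p) (Fin m) ℝ)
    (u : ℕ → Fin m → ℝ) (y : ℕ → Fin p → ℝ) : Prop :=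
  ∃ x : ℕ → Fin n → ℝ,
    (∀ t, t + 1 < N → x (t + 1) = A.mulVec (x t) + B.mulVec (u t)) ∧
    (∀ t, t < N → y t = C.mulVec (x t) + D.mulVec (u t))

/-- Easy direction of the Fundamental Lemma: if `(u^d, y^d)` is a trajectory
of length `T` of the LTI system `(A, B, C, D)`, `N ≤ T`, and
`g ∈ ℝ^{T-N+1}` is arbitrary, then the length-`N` signals
`u = H_N(u^d) g` and `y = H_N(y^d) g` form a trajectory of length `N` of the
same system. -/
theorem hankel_combination_is_trajectory (n m p T N : ℕ)
    (A : Matrix (Fin n) (Fin n) ℝ) (B : Matrix (Fin n) (Fin m) ℝ)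
    (C : Matrix (Fin p) (Fin n) ℝ) (D : Matrix (Fin p) (Fin m) ℝ)
    (ud : ℕ → Fin m → ℝ) (yd : ℕ → Fin p → ℝ)
    (hd : IsTrajectory n m p T A B C D ud yd) (hN : N ≤ T)
    (g : Fin (T - N + 1) → ℝ)
    (u : ℕ → Fin m → ℝ) (y : ℕ → Fin p → ℝ)
    (hu : ∀ (t : ℕ) (ht : t < N) (a : Fin m),
      u t a = (hankelMatrix m N T ud).mulVec g ((⟨t, ht⟩ : Fin N), a))
    (hy : ∀ (t : ℕ) (ht : t < N) (a : Fin p),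
      y t a = (hankelMatrix p N T yd).mulVec g ((⟨t, ht⟩ : Fin N), a)) :
    IsTrajectory n m p N A B C D u y := by
  obtain ⟨xd, hx1, hx2⟩ := hd
  refine ⟨fun t a => ∑ k : Fin (T - N + 1), g k * xd (t + k.val) a, ?_, ?_⟩
  · intro t ht
    funext a
    have hud : ∀ b : Fin m, u t b = ∑ k : Fin (T - N + 1), ud (t + k.val) b * g k := by
      intro b
      rw [hu t (by omega) b]
      simp [mulVec, dotProduct, hankelMatrix]
    have hstep : ∀ k : Fin (T - N + 1),
        xd (t + k.val + 1) = A.mulVec (xd (t + k.val)) + B.mulVec (ud (t + k.val)) := by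
      intro k
      exact hx1 (t + k.val) (by have := k.isLt; omega)
    simp only [Pi.add_apply, mulVec, dotProduct, hud]
    simp only [Finset.mul_sum]
    rw [Finset.sum_comm (γ := Fin n), Finset.sum_comm (γ := Fin m), ← Finset.sum_add_distrib]
    refine Finset.sum_congr rfl fun k _ => ?_
    have h := congrFun (hstep k) a
    simp only [Pi.add_apply, mulVec, dotProduct] at h
    have e : t + 1 + k.val = t + k.val + 1 := by omega
    rw [e, h, mul_add, Finset.mul_sum, Finset.mul_sum]
    congr 1 <;> exact Finset.sum_congr rfl fun j _ => by ring
  · intro t ht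
    funext a
    have hyd : y t a = ∑ k : Fin (T - N + 1), yd (t + k.val) a * g k := by
      rw [hy t ht a]
      simp [mulVec, dotProduct, hankelMatrix]
    have hud : ∀ b : Fin m, u t b = ∑ k : Fin (T - N + 1), ud (t + k.val) b * g k := by
      intro b
      rw [hu t ht b]
      simp [mulVec, dotProduct, hankelMatrix]
    have hout : ∀ k : Fin (T - N + 1),
        yd (t + k.val) = C.mulVec (xd (t + k.val)) + D.mulVec (ud (t + k.val)) := by
      intro k
      exact hx2 (t + k.val) (by have := k.isLt; omega)
    rw [hyd]
    simp only [Pi.add_apply, mulVec, dotProduct, hud]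
    simp only [Finset.mul_sum]
    rw [Finset.sum_comm (γ := Fin n), Finset.sum_comm (γ := Fin m), ← Finset.sum_add_distrib]
    refine Finset.sum_congr rfl fun k _ => ?_
    have h := congrFun (hout k) a
    simp only [Pi.add_apply, mulVec, dotProduct] at h
    rw [h, add_mul, Finset.sum_mul, Finset.sum_mul]
    congr 1 <;> exact Finset.sum_congr rfl fun j _ => by ring
end

section
/- Fundamental Lemma (Willems et al.): let (A,B,C,D) be a minimal LTI system that is controllable, i.e., rank [B, AB, …, A^{n−1}B] = n, let (u^d, y^d) be a trajectory of length T of the system, and suppose the input u^d is persistently exciting of order N+n, i.e., rank H_{N+n}(u^d) = m(N+n). Then an input-output pair (u, y) of length N is a trajectory of the system if and only if there exists g ∈ ℝ^{T−N+1} such that H_N(u^d) g = u and H_N(y^d) g = y. -/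
open Matrix

/-- The controllability matrix `[B, AB, …, A^{n-1}B]`. -/
def ctrbMatrix (n m : ℕ) (A : Matrix (Fin n) (Fin n) ℝ)
    (B : Matrix (Fin n) (Fin m) ℝ) : Matrix (Fin n) (Fin n × Fin m) ℝ :=
  fun i jk => (A ^ (jk.1 : ℕ) * B) i jk.2

/-- The observability matrix `[C; CA; …; CA^{K-1}]` of order `K`. -/
def obsMatrix (n p K : ℕ) (A : Matrix (Fin n) (Fin n) ℝ)
    (C : Matrix (Fin p) (Fin n) ℝ) : Matrix (Fin K × Fin p) (Fin n) ℝ :=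
  fun ip j => (C * A ^ (ip.1 : ℕ)) ip.2 j

/-!
A row vector annihilating the data matrix `H_N(u)` stacked on the state matrix `[x(0) … x(T-N)]` is
encoded as a pair `(η, ξ)` with `ξ` a vector of polynomials of degree `< N`. The map
`(η, ξ) ↦ (η A, η B + X ξ)` turns an annihilator of the columns `k + 1` into one of the columns `k`,
because `x (k + 1) = A x k + B u k`. Applying the characteristic polynomial `χ` of `A` to it kills the
state part `η χ(A) = 0` (Cayley–Hamilton), leaving an annihilator of `H_{N+n}(u)` alone, which is
zero by persistent excitation. Its polynomial part is `χ ξ` plus a remainder of degree `< n`, so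
`ξ = 0`; as the kernel of `χ(shift)` is shift-invariant, also `η A^j B = 0` for all `j`, and
`η = 0` by controllability. Hence the stacked matrix has full row rank: every input window together
with every initial state is attained by one combination `g` of the data columns. Since linear
combinations of time-shifted data trajectories are trajectories, and outputs are determined by the
input and the initial state, the equivalence follows.
-/

open Polynomial

theorem Matrix.vecMul_injective_of_rank_eq_card {R α β : Type*} [Field R] [Fintype α] [Fintype β]
    {M : Matrix α β R} (h : M.rank = Fintype.card α) : Function.Injective M.vecMul := by
  rw [vecMul_injective_iff, linearIndependent_iff_card_eq_finrank_span, ← h,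
    rank_eq_finrank_span_row, Set.finrank]

theorem Matrix.mulVec_surjective_of_vecMul_injective {R α β : Type*} [Field R] [Fintype α]
    [Fintype β] {M : Matrix α β R} (h : Function.Injective M.vecMul) :
    Function.Surjective M.mulVec := by
  have hrank := (vecMul_injective_iff.1 h).rank_matrix
  rw [rank, ← Module.finrank_fintype_fun_eq_card R] at hrank
  exact LinearMap.range_eq_top.1 (Submodule.eq_top_of_finrank_eq hrank)

theorem Polynomial.mul_mem_degreeLT_add {R : Type*} [Semiring R] {p q : R[X]} {d L : ℕ}
    (hp : p.natDegree ≤ d) (hq : q ∈ degreeLT R L) : p * q ∈ degreeLT R (L + d) := by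
  rcases eq_or_ne (p * q) 0 with h | h
  · rw [h]; exact zero_mem _
  rw [mem_degreeLT] at hq ⊢
  rw [degree_eq_natDegree h]
  have hq' := (natDegree_lt_iff_degree_lt (right_ne_zero_of_mul h)).2 hq
  have := natDegree_mul_le (p := p) (q := q)
  norm_cast
  omega

section RowShift

variable {K : Type*} [Field K] {σ ι : Type*} [Fintype σ] (A : Matrix σ σ K) (B : Matrix σ ι K)

/-- A pair `(η, ξ)` stands for the row vector `[ξ₀ … ξ_{L-1} | η]` acting on the data column
`(u k, …, u (k + L - 1), x k)`, with `ξᵢ` the coefficient of `X ^ i` (see `rowPairing`);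
`rowShift` is the transpose of the time shift along a trajectory (`rowPairing_rowShift`). -/
noncomputable def rowShift : Module.End K ((σ → K) × (ι → K[X])) where
  toFun v := (v.1 ᵥ* A, fun a => C ((v.1 ᵥ* B) a) + X * v.2 a)
  map_add' v w := by
    ext1
    · simp [add_vecMul]
    · funext a
      simp [add_vecMul, mul_add]
      ring
  map_smul' c v := by
    ext1
    · simp [smul_vecMul]
    · funext a
      simp [smul_vecMul, smul_eq_C_mul]
      ring

variable {A B}

theorem rowShift_apply (v : (σ → K) × (ι → K[X])) :
    rowShift A B v = (v.1 ᵥ* A, fun a => C ((v.1 ᵥ* B) a) + X * v.2 a) := rfl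

theorem rowShift_pow_fst [DecidableEq σ] (j : ℕ) (v : (σ → K) × (ι → K[X])) :
    ((rowShift A B ^ j) v).1 = v.1 ᵥ* A ^ j := by
  induction j with
  | zero => simp
  | succ j ih => rw [pow_succ', Module.End.mul_apply, rowShift_apply, ih, vecMul_vecMul, pow_succ]

theorem rowShift_pow_inr (j : ℕ) (ξ : ι → K[X]) :
    (rowShift A B ^ j) (0, ξ) = (0, fun a => X ^ j * ξ a) := by
  induction j with
  | zero => simp
  | succ j ih =>
    rw [pow_succ', Module.End.mul_apply, ih, rowShift_apply]
    simp [pow_succ', mul_assoc]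

theorem rowShift_pow_inl_snd_mem_degreeLT (j : ℕ) (η : σ → K) (a : ι) :
    ((rowShift A B ^ j) (η, 0)).2 a ∈ degreeLT K j := by
  induction j with
  | zero => simp
  | succ j ih =>
    rw [mem_degreeLT, degree_lt_iff_coeff_zero] at ih ⊢
    rintro (_ | i) hi
    · omega
    · rw [pow_succ', Module.End.mul_apply, rowShift_apply]
      simp [coeff_X_mul, ih i (by omega)]

theorem aeval_rowShift_fst [DecidableEq σ] (p : K[X]) (v : (σ → K) × (ι → K[X])) :
    (aeval (rowShift A B) p v).1 = v.1 ᵥ* aeval A p := by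
  simp [aeval_eq_sum_range, LinearMap.sum_apply, Prod.fst_sum, rowShift_pow_fst, vecMul_sum,
    vecMul_smul]

theorem aeval_rowShift_inr (p : K[X]) (ξ : ι → K[X]) :
    aeval (rowShift A B) p (0, ξ) = (0, fun a => p * ξ a) := by
  ext1
  · simp [aeval_eq_sum_range, LinearMap.sum_apply, Prod.fst_sum, rowShift_pow_inr]
  · funext a
    conv_rhs => rw [as_sum_range_C_mul_X_pow p]
    simp [aeval_eq_sum_range, LinearMap.sum_apply, Prod.snd_sum, rowShift_pow_inr, Finset.sum_mul,
      smul_eq_C_mul, mul_assoc]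

theorem aeval_rowShift_inl_snd_mem_degreeLT (p : K[X]) (η : σ → K) (a : ι) :
    (aeval (rowShift A B) p (η, 0)).2 a ∈ degreeLT K p.natDegree := by
  rw [aeval_eq_sum_range]
  simp only [LinearMap.sum_apply, LinearMap.smul_apply, Prod.snd_sum, Finset.sum_apply,
    Prod.smul_snd, Pi.smul_apply]
  refine Submodule.sum_mem _ fun j hj => Submodule.smul_mem _ _ ?_
  exact degreeLT_mono (by simpa [Nat.lt_succ_iff] using hj)
    (rowShift_pow_inl_snd_mem_degreeLT j η a)

theorem aeval_rowShift_snd (p : K[X]) (v : (σ → K) × (ι → K[X])) (a : ι) :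
    (aeval (rowShift A B) p v).2 a = p * v.2 a + (aeval (rowShift A B) p (v.1, 0)).2 a := by
  rw [show v = (v.1, 0) + (0, v.2) by simp, map_add, Prod.snd_add, aeval_rowShift_inr]
  simp [add_comm]

theorem snd_eq_zero_of_aeval_charpoly_rowShift [DecidableEq σ] {v : (σ → K) × (ι → K[X])}
    (hv : aeval (rowShift A B) A.charpoly v = 0) : v.2 = 0 := by
  funext a
  set r := (aeval (rowShift A B) A.charpoly (v.1, 0)).2 a
  have hsum : A.charpoly * v.2 a + r = 0 := by
    rw [← aeval_rowShift_snd, hv]; rfl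
  have hr : r.degree < A.charpoly.degree := by
    rw [degree_eq_natDegree A.charpoly_monic.ne_zero, ← mem_degreeLT]
    exact aeval_rowShift_inl_snd_mem_degreeLT _ _ a
  have hr0 : r = 0 := eq_zero_of_dvd_of_degree_lt ⟨-v.2 a, by linear_combination hsum⟩ hr
  simpa [hr0, A.charpoly_monic.ne_zero] using hsum

theorem eq_zero_of_aeval_charpoly_rowShift [DecidableEq σ]
    (hAB : ∀ η : σ → K, (∀ j, η ᵥ* (A ^ j * B) = 0) → η = 0) {v : (σ → K) × (ι → K[X])}
    (hv : aeval (rowShift A B) A.charpoly v = 0) : v = 0 := by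
  have hker : ∀ j, aeval (rowShift A B) A.charpoly ((rowShift A B ^ j) v) = 0 := fun j => by
    have hcomm : Commute (aeval (rowShift A B) A.charpoly) (rowShift A B ^ j) := by
      simpa using (Commute.all A.charpoly (X ^ j)).map (aeval (rowShift A B))
    rw [← Module.End.mul_apply, hcomm.eq, Module.End.mul_apply, hv, map_zero]
  -- `rowShift` maps `(η A ^ j, 0)`, in the kernel, to `(η A ^ (j + 1), η A ^ j B)`, in the kernel.
  have hηAB : ∀ j, v.1 ᵥ* (A ^ j * B) = 0 := fun j => by
    have h := snd_eq_zero_of_aeval_charpoly_rowShift (hker (j + 1))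
    rw [pow_succ', Module.End.mul_apply, rowShift_apply,
      snd_eq_zero_of_aeval_charpoly_rowShift (hker j), rowShift_pow_fst, vecMul_vecMul] at h
    funext a
    simpa using congr_fun h a
  exact Prod.ext (hAB _ hηAB) (snd_eq_zero_of_aeval_charpoly_rowShift hv)

end RowShift

section Pairing

variable {K : Type*} [Field K] {σ ι : Type*} [Fintype σ] [Fintype ι]

noncomputable def seqPairing (w : ℕ → K) : K[X] →ₗ[K] K :=
  lsum fun i => LinearMap.id.smulRight (w i)

theorem seqPairing_monomial (w : ℕ → K) (i : ℕ) (c : K) : seqPairing w (monomial i c) = c * w i := by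
  simp [seqPairing, sum_monomial_index]

theorem seqPairing_C_add_X_mul (w : ℕ → K) (c : K) (p : K[X]) :
    seqPairing w (C c + X * p) = c * w 0 + seqPairing (fun i => w (i + 1)) p := by
  rw [map_add, ← monomial_zero_left, seqPairing_monomial, add_right_inj]
  induction p using Polynomial.induction_on' with
  | add p q hp hq => rw [mul_add, map_add, map_add, hp, hq]
  | monomial i c => rw [X_mul_monomial, seqPairing_monomial, seqPairing_monomial]

noncomputable def rowPairing (u : ℕ → ι → K) (x : ℕ → σ → K) (k : ℕ) :
    (σ → K) × (ι → K[X]) →ₗ[K] K where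
  toFun v := v.1 ⬝ᵥ x k + ∑ a, seqPairing (fun i => u (i + k) a) (v.2 a)
  map_add' v w := by simp [add_dotProduct, Finset.sum_add_distrib]; ring
  map_smul' c v := by
    simp only [Prod.smul_fst, Prod.smul_snd, Pi.smul_apply, smul_dotProduct, map_smul, smul_eq_mul,
      RingHom.id_apply, Finset.mul_sum, mul_add]

variable {A : Matrix σ σ K} {B : Matrix σ ι K} {u : ℕ → ι → K} {x : ℕ → σ → K}

theorem rowPairing_apply (k : ℕ) (v : (σ → K) × (ι → K[X])) :
    rowPairing u x k v = v.1 ⬝ᵥ x k + ∑ a, seqPairing (fun i => u (i + k) a) (v.2 a) := rfl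

theorem rowPairing_rowShift {k : ℕ} (hx : x (k + 1) = A *ᵥ x k + B *ᵥ u k)
    (v : (σ → K) × (ι → K[X])) :
    rowPairing u x k (rowShift A B v) = rowPairing u x (k + 1) v := by
  simp only [rowPairing_apply, rowShift_apply, seqPairing_C_add_X_mul, Finset.sum_add_distrib, hx,
    dotProduct_add, dotProduct_mulVec, zero_add, add_assoc, add_right_comm _ 1 k]
  simp [dotProduct]

theorem rowPairing_rowShift_pow {T : ℕ} (hx : ∀ t, t + 1 < T → x (t + 1) = A *ᵥ x t + B *ᵥ u t)
    {j k : ℕ} (hjk : k + j < T) (v : (σ → K) × (ι → K[X])) :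
    rowPairing u x k ((rowShift A B ^ j) v) = rowPairing u x (k + j) v := by
  induction j generalizing k with
  | zero => rfl
  | succ j ih =>
    rw [pow_succ', Module.End.mul_apply, rowPairing_rowShift (hx _ (by omega)), ih (by omega),
      add_assoc, add_comm 1 j]

theorem rowPairing_aeval_eq_zero {T W d : ℕ}
    (hx : ∀ t, t + 1 < T → x (t + 1) = A *ᵥ x t + B *ᵥ u t) (hT : W + d ≤ T)
    {p : K[X]} (hp : p.natDegree ≤ d) {v : (σ → K) × (ι → K[X])}
    (hv : ∀ k < W + d, rowPairing u x k v = 0) {k : ℕ} (hk : k < W) :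
    rowPairing u x k (aeval (rowShift A B) p v) = 0 := by
  rw [aeval_eq_sum_range, LinearMap.sum_apply, map_sum]
  refine Finset.sum_eq_zero fun j hj => ?_
  have hj : j ≤ d := by simp at hj; omega
  rw [LinearMap.smul_apply, map_smul, rowPairing_rowShift_pow hx (by omega), hv _ (by omega),
    smul_zero]

theorem eq_zero_of_rowPairing_eq_zero [DecidableEq σ] {T W L : ℕ}
    (hAB : ∀ η : σ → K, (∀ j, η ᵥ* (A ^ j * B) = 0) → η = 0)
    (hx : ∀ t, t + 1 < T → x (t + 1) = A *ᵥ x t + B *ᵥ u t)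
    (hpe : ∀ ζ : ι → K[X], (∀ a, ζ a ∈ degreeLT K (L + Fintype.card σ)) →
      (∀ k < W, ∑ a, seqPairing (fun i => u (i + k) a) (ζ a) = 0) → ζ = 0)
    (hT : W + Fintype.card σ ≤ T) {v : (σ → K) × (ι → K[X])} (hdeg : ∀ a, v.2 a ∈ degreeLT K L)
    (hv : ∀ k < W + Fintype.card σ, rowPairing u x k v = 0) : v = 0 := by
  refine eq_zero_of_aeval_charpoly_rowShift hAB (Prod.ext ?_ ?_)
  · rw [aeval_rowShift_fst, aeval_self_charpoly, vecMul_zero]; rfl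
  · apply hpe
    · intro a
      rw [aeval_rowShift_snd]
      refine Submodule.add_mem _ (mul_mem_degreeLT_add (charpoly_natDegree_eq_dim A).le (hdeg a))
        (degreeLT_mono ?_ (aeval_rowShift_inl_snd_mem_degreeLT _ _ a))
      rw [charpoly_natDegree_eq_dim]
      omega
    · intro k hk
      have := rowPairing_aeval_eq_zero hx hT (charpoly_natDegree_eq_dim A).le hv hk
      rwa [rowPairing_apply, aeval_rowShift_fst, aeval_self_charpoly, vecMul_zero, zero_dotProduct,
        zero_add] at this

end Pairing

section GeneratingPoly

variable {K : Type*} [Field K] {ι : Type*} {L : ℕ}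

noncomputable def generatingPoly (r : Fin L × ι → K) (a : ι) : K[X] :=
  ∑ i : Fin L, monomial i (r (i, a))

theorem generatingPoly_mem_degreeLT (r : Fin L × ι → K) (a : ι) :
    generatingPoly r a ∈ degreeLT K L :=
  Submodule.sum_mem _ fun i _ => mem_degreeLT.2 <|
    (degree_monomial_le _ _).trans_lt (by exact_mod_cast i.2)

theorem coeff_generatingPoly (r : Fin L × ι → K) (a : ι) (i : Fin L) :
    (generatingPoly r a).coeff i = r (i, a) := by
  simp [generatingPoly, coeff_monomial, Fin.val_inj]

theorem generatingPoly_coeff {ζ : ι → K[X]} (hζ : ∀ a, ζ a ∈ degreeLT K L) :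
    generatingPoly (fun ia : Fin L × ι => (ζ ia.2).coeff ia.1) = ζ := by
  funext a
  ext i
  by_cases hi : i < L
  · exact coeff_generatingPoly _ a ⟨i, hi⟩
  · rw [coeff_eq_zero_of_degree_lt ((mem_degreeLT.1 (generatingPoly_mem_degreeLT _ a)).trans_le
      (by exact_mod_cast not_lt.1 hi)), coeff_eq_zero_of_degree_lt
      ((mem_degreeLT.1 (hζ a)).trans_le (by exact_mod_cast not_lt.1 hi))]

theorem seqPairing_generatingPoly (w : ℕ → K) (r : Fin L × ι → K) (a : ι) :
    seqPairing w (generatingPoly r a) = ∑ i : Fin L, r (i, a) * w i := by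
  simp [generatingPoly, seqPairing_monomial]

end GeneratingPoly

theorem vecMul_hankelMatrix_apply {m L T : ℕ} (u : ℕ → Fin m → ℝ) (r : Fin L × Fin m → ℝ)
    (k : Fin (T - L + 1)) :
    (r ᵥ* hankelMatrix m L T u) k = ∑ a, seqPairing (fun i => u (i + k) a) (generatingPoly r a) := by
  simp only [vecMul, dotProduct, hankelMatrix, Fintype.sum_prod_type, seqPairing_generatingPoly]
  exact Finset.sum_comm

theorem eq_zero_of_rank_hankelMatrix {m L T : ℕ} {u : ℕ → Fin m → ℝ}
    (hpe : (hankelMatrix m L T u).rank = m * L) {ζ : Fin m → ℝ[X]}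
    (hdeg : ∀ a, ζ a ∈ degreeLT ℝ L)
    (hζ : ∀ k < T - L + 1, ∑ a, seqPairing (fun i => u (i + k) a) (ζ a) = 0) : ζ = 0 := by
  have hr := vecMul_injective_of_rank_eq_card (by simpa [mul_comm] using hpe)
    (a₂ := 0) (a₁ := fun ia : Fin L × Fin m => (ζ ia.2).coeff ia.1) <| by
      funext k
      dsimp only
      rw [vecMul_hankelMatrix_apply, generatingPoly_coeff hdeg, zero_vecMul]
      exact hζ k k.2
  rw [← generatingPoly_coeff hdeg, hr]
  funext a
  simp [generatingPoly]

theorem eq_zero_of_rank_ctrbMatrix {n m : ℕ} {A : Matrix (Fin n) (Fin n) ℝ}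
    {B : Matrix (Fin n) (Fin m) ℝ} (hctrb : (ctrbMatrix n m A B).rank = n) (η : Fin n → ℝ)
    (hη : ∀ j, η ᵥ* (A ^ j * B) = 0) : η = 0 :=
  vecMul_injective_of_rank_eq_card (by simpa using hctrb) (a₂ := 0) <| by
    funext ja
    dsimp only
    rw [zero_vecMul]
    exact congr_fun (hη ja.1) ja.2

def stateDataMatrix (n N T : ℕ) (x : ℕ → Fin n → ℝ) : Matrix (Fin n) (Fin (T - N + 1)) ℝ :=
  of fun j k => x k j

theorem vecMul_fromRows_hankelMatrix_stateDataMatrix_apply {n m N T : ℕ} (u : ℕ → Fin m → ℝ)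
    (x : ℕ → Fin n → ℝ) (r : (Fin N × Fin m) ⊕ Fin n → ℝ) (k : Fin (T - N + 1)) :
    (r ᵥ* fromRows (hankelMatrix m N T u) (stateDataMatrix n N T x)) k =
      rowPairing u x k (r ∘ Sum.inr, generatingPoly (r ∘ Sum.inl)) := by
  rw [vecMul_fromRows, Pi.add_apply, vecMul_hankelMatrix_apply, rowPairing_apply, add_comm]
  rfl

theorem vecMul_injective_fromRows_hankelMatrix_stateDataMatrix {n m N T : ℕ}
    {A : Matrix (Fin n) (Fin n) ℝ} {B : Matrix (Fin n) (Fin m) ℝ}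
    (hctrb : (ctrbMatrix n m A B).rank = n) {u : ℕ → Fin m → ℝ} {x : ℕ → Fin n → ℝ}
    (hx : ∀ t, t + 1 < T → x (t + 1) = A *ᵥ x t + B *ᵥ u t) (hN : 0 < N) (hNnT : N + n ≤ T)
    (hpe : (hankelMatrix m (N + n) T u).rank = m * (N + n)) :
    Function.Injective (fromRows (hankelMatrix m N T u) (stateDataMatrix n N T x)).vecMul := by
  rw [← coe_vecMulLinear, injective_iff_map_eq_zero]
  intro r hr
  have hpair : (r ∘ Sum.inr, generatingPoly (r ∘ Sum.inl)) = 0 :=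
    eq_zero_of_rowPairing_eq_zero (W := T - (N + n) + 1) (eq_zero_of_rank_ctrbMatrix hctrb) hx
      (fun ζ hdeg hζ => eq_zero_of_rank_hankelMatrix hpe (by simpa using hdeg) hζ)
      (by simp; omega) (generatingPoly_mem_degreeLT _) fun k hk => by
        simpa [vecMul_fromRows_hankelMatrix_stateDataMatrix_apply] using
          congr_fun hr ⟨k, by simp at hk; omega⟩
  ext (ia | j)
  · simpa [coeff_generatingPoly] using
      congr_arg (fun ζ => (ζ ia.2).coeff ia.1) (congr_arg Prod.snd hpair)
  · exact congr_fun (congr_arg Prod.fst hpair) j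

section StateTrajectory

variable {R : Type*} [CommRing R] {σ ι τ : Type*} [Fintype σ] [Fintype ι]
  {A : Matrix σ σ R} {B : Matrix σ ι R} {C : Matrix τ σ R} {D : Matrix τ ι R}

def IsStateTrajectory (A : Matrix σ σ R) (B : Matrix σ ι R) (C : Matrix τ σ R)
    (D : Matrix τ ι R) (N : ℕ) (u : ℕ → ι → R) (x : ℕ → σ → R) (y : ℕ → τ → R) : Prop :=
  (∀ t, t + 1 < N → x (t + 1) = A *ᵥ x t + B *ᵥ u t) ∧
    (∀ t, t < N → y t = C *ᵥ x t + D *ᵥ u t)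

namespace IsStateTrajectory

variable {N : ℕ} {u u' : ℕ → ι → R} {x x' : ℕ → σ → R} {y y' : ℕ → τ → R}

theorem shift {T : ℕ} (h : IsStateTrajectory A B C D T u x y) {k : ℕ} (hk : N + k ≤ T) :
    IsStateTrajectory A B C D N (fun t => u (t + k)) (fun t => x (t + k)) (fun t => y (t + k)) :=
  ⟨fun t ht => by simpa only [add_right_comm t 1 k] using h.1 (t + k) (by omega),
    fun t ht => h.2 _ (by omega)⟩

theorem sum {κ : Type*} (s : Finset κ) (g : κ → R) {u : κ → ℕ → ι → R} {x : κ → ℕ → σ → R}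
    {y : κ → ℕ → τ → R} (h : ∀ k ∈ s, IsStateTrajectory A B C D N (u k) (x k) (y k)) :
    IsStateTrajectory A B C D N (∑ k ∈ s, g k • u k) (∑ k ∈ s, g k • x k)
      (∑ k ∈ s, g k • y k) := by
  constructor
  · intro t ht
    simp only [Finset.sum_apply, Pi.smul_apply, mulVec_sum, mulVec_smul, ← Finset.sum_add_distrib,
      ← smul_add]
    exact Finset.sum_congr rfl fun k hk => by rw [(h k hk).1 t ht]
  · intro t ht
    simp only [Finset.sum_apply, Pi.smul_apply, mulVec_sum, mulVec_smul, ← Finset.sum_add_distrib,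
      ← smul_add]
    exact Finset.sum_congr rfl fun k hk => by rw [(h k hk).2 t ht]

theorem congr (h : IsStateTrajectory A B C D N u x y) (hu : ∀ t < N, u' t = u t)
    (hy : ∀ t < N, y' t = y t) : IsStateTrajectory A B C D N u' x y' :=
  ⟨fun t ht => by rw [hu t (by omega)]; exact h.1 t ht,
    fun t ht => by rw [hu t ht, hy t ht]; exact h.2 t ht⟩

theorem state_eq (h : IsStateTrajectory A B C D N u x y) (h' : IsStateTrajectory A B C D N u' x' y')
    (hu : ∀ t < N, u t = u' t) (h0 : x 0 = x' 0) : ∀ t < N, x t = x' t := by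
  intro t ht
  induction t with
  | zero => exact h0
  | succ t ih => rw [h.1 t ht, h'.1 t ht, ih (by omega), hu t (by omega)]

theorem output_eq (h : IsStateTrajectory A B C D N u x y)
    (h' : IsStateTrajectory A B C D N u' x' y') (hu : ∀ t < N, u t = u' t) (h0 : x 0 = x' 0) :
    ∀ t < N, y t = y' t := fun t ht => by
  rw [h.2 t ht, h'.2 t ht, h.state_eq h' hu h0 t ht, hu t ht]

end IsStateTrajectory

end StateTrajectory

theorem hankelMatrix_mulVec_apply {m N T : ℕ} (u : ℕ → Fin m → ℝ) (g : Fin (T - N + 1) → ℝ)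
    (i : Fin N) (a : Fin m) :
    (hankelMatrix m N T u *ᵥ g) (i, a) = (∑ k, g k • fun t => u (t + k)) i a := by
  simp [hankelMatrix, mulVec, dotProduct, Finset.sum_apply, mul_comm]

theorem stateDataMatrix_mulVec {n N T : ℕ} (x : ℕ → Fin n → ℝ) (g : Fin (T - N + 1) → ℝ) :
    stateDataMatrix n N T x *ᵥ g = (∑ k, g k • fun t => x (t + k)) 0 := by
  ext j
  simp [stateDataMatrix, mulVec, dotProduct, Finset.sum_apply, mul_comm]

theorem fundamental_lemma_general (n m p T N : ℕ)
    (A : Matrix (Fin n) (Fin n) ℝ) (B : Matrix (Fin n) (Fin m) ℝ)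
    (C : Matrix (Fin p) (Fin n) ℝ) (D : Matrix (Fin p) (Fin m) ℝ)
    (hctrb : (ctrbMatrix n m A B).rank = n)
    (ud : ℕ → Fin m → ℝ) (yd : ℕ → Fin p → ℝ)
    (hd : IsTrajectory n m p T A B C D ud yd)
    (hNnT : N + n ≤ T)
    (hpe : (hankelMatrix m (N + n) T ud).rank = m * (N + n))
    (u : ℕ → Fin m → ℝ) (y : ℕ → Fin p → ℝ) :
    IsTrajectory n m p N A B C D u y ↔
      ∃ g : Fin (T - N + 1) → ℝ,
        (∀ (t : ℕ) (ht : t < N) (a : Fin m),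
          (hankelMatrix m N T ud).mulVec g ((⟨t, ht⟩ : Fin N), a) = u t a) ∧
        (∀ (t : ℕ) (ht : t < N) (a : Fin p),
          (hankelMatrix p N T yd).mulVec g ((⟨t, ht⟩ : Fin N), a) = y t a) := by
  obtain ⟨xd, hd⟩ : ∃ x, IsStateTrajectory A B C D T ud x yd := hd
  rcases Nat.eq_zero_or_pos N with rfl | hN
  · exact iff_of_true ⟨0, by simp, by simp⟩ ⟨0, by simp, by simp⟩
  have hcomb (g : Fin (T - N + 1) → ℝ) := IsStateTrajectory.sum Finset.univ g
    (u := fun k t => ud (t + k)) (x := fun k t => xd (t + k)) (y := fun k t => yd (t + k))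
    fun k _ => hd.shift (N := N) (by omega)
  constructor
  · rintro ⟨x, hx⟩
    obtain ⟨g, hg⟩ := mulVec_surjective_of_vecMul_injective
      (vecMul_injective_fromRows_hankelMatrix_stateDataMatrix hctrb hd.1 hN hNnT hpe)
      (Sum.elim (fun ia => u ia.1 ia.2) (x 0))
    rw [fromRows_mulVec, Sum.elim_eq_iff, stateDataMatrix_mulVec] at hg
    have hu : ∀ t < N, (∑ k, g k • fun t => ud (t + k)) t = u t := fun t ht =>
      funext fun a => by simpa [hankelMatrix_mulVec_apply] using congr_fun hg.1 (⟨t, ht⟩, a)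
    refine ⟨g, fun t ht a => ?_, fun t ht a => ?_⟩
    · rw [hankelMatrix_mulVec_apply, hu t ht]
    · rw [hankelMatrix_mulVec_apply, (hcomb g).output_eq hx hu hg.2 t ht]
  · rintro ⟨g, hu, hy⟩
    refine ⟨_, (hcomb g).congr (fun t ht => ?_) fun t ht => ?_⟩ <;> ext a
    · rw [← hu t ht a, hankelMatrix_mulVec_apply]
    · rw [← hy t ht a, hankelMatrix_mulVec_apply]

/-- Fundamental Lemma (Willems et al.): for a minimal (controllable and
observable) LTI system `(A, B, C, D)`, if `(u^d, y^d)` is a trajectory of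
length `T` whose input is persistently exciting of order `N + n`, then a
length-`N` input-output pair `(u, y)` is a trajectory of the system if and
only if there exists `g ∈ ℝ^{T-N+1}` with `H_N(u^d) g = u` and
`H_N(y^d) g = y`. -/
theorem fundamental_lemma (n m p T N : ℕ)
    (A : Matrix (Fin n) (Fin n) ℝ) (B : Matrix (Fin n) (Fin m) ℝ)
    (C : Matrix (Fin p) (Fin n) ℝ) (D : Matrix (Fin p) (Fin m) ℝ)
    (hctrb : (ctrbMatrix n m A B).rank = n)
    (hobs : (obsMatrix n p n A C).rank = n)
    (ud : ℕ → Fin m → ℝ) (yd : ℕ → Fin p → ℝ)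
    (hd : IsTrajectory n m p T A B C D ud yd)
    (hNnT : N + n ≤ T)
    (hpe : (hankelMatrix m (N + n) T ud).rank = m * (N + n))
    (u : ℕ → Fin m → ℝ) (y : ℕ → Fin p → ℝ) :
    IsTrajectory n m p N A B C D u y ↔
      ∃ g : Fin (T - N + 1) → ℝ,
        (∀ (t : ℕ) (ht : t < N) (a : Fin m),
          (hankelMatrix m N T ud).mulVec g ((⟨t, ht⟩ : Fin N), a) = u t a) ∧
        (∀ (t : ℕ) (ht : t < N) (a : Fin p),
          (hankelMatrix p N T yd).mulVec g ((⟨t, ht⟩ : Fin N), a) = y t a) :=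
  fundamental_lemma_general n m p T N A B C D hctrb ud yd hd hNnT hpe u y
end
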